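/- Let G be a finite simple graph with vertex set V, let a ≥ 1 be an integer and V_D' ⊆ V. Let S_1, …, S_k ⊆ V be pairwise disjoint vertex sets such that each induced subgraph G[S_i] is connected, and such that for each u ∈ V_D', either N^a(u) ⊆ S_i for some 1 ≤ i ≤ k, or N^a(u) ∩ (S_1 ∪ … ∪ S_k) = ∅. Define S := {v ∈ V : dist_G(v, S_1 ∪ … ∪ S_k) ≤ a}, and suppose G[S] is connected. Then (1) N_S = Σ_{i=1}^k N_{S_i}, and (2) D_S ≤ −1 + Σ_{i=1}^k (D_{S_i} + 2a + 1). -/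

import Mathlib

/-!
Every vertex of `V_D'` lying in `S` has its whole `a`-ball inside a single `Sᵢ`. Hence a packing
of `S` splits along the parts; conversely, packing points in different parts are more than `2a`
apart, because a vertex within `a` of both would lie in two disjoint parts, so maximum packings of
the parts glue to a packing of `S`.

For the diameter, take a shortest path of `G[S]` between two vertices of `S`. Its vertices are
covered by the `a`-neighbourhoods of the `Sᵢ`, each of diameter at most `D_{Sᵢ} + 2a` in `G[S]`,
and a shortest path meets a set of diameter `c` in at most `c + 1` vertices, since they span a
subpath of length at most `c`. Counting the vertices of the path gives the bound.
-/

open Finset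

/-- The subgraph of `G` induced by the vertex set `S`, viewed as a graph on all of `V`
(vertices outside `S` are isolated). Distances between vertices of `S` in this graph agree
with distances in the induced subgraph `G[S]`. -/
def SimpleGraph.restrictS {V : Type*} (G : SimpleGraph V) (S : Set V) : SimpleGraph V where
  Adj u v := u ∈ S ∧ v ∈ S ∧ G.Adj u v
  symm := ⟨fun _ _ ⟨hu, hv, h⟩ => ⟨hv, hu, h.symm⟩⟩
  loopless := ⟨fun _ ⟨_, _, h⟩ => G.ne_of_adj h rfl⟩

/-- `N_S`: the maximum size of a subset `T ⊆ S ∩ V_D'` whose elements are pairwise at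
`G`-distance greater than `2a`. -/
noncomputable def packing {V : Type*} [Fintype V] (G : SimpleGraph V) (VD : Set V)
    (a : ℕ) (S : Set V) : ℕ :=
  sSup {n | ∃ T : Finset V, ↑T ⊆ S ∩ VD ∧ T.card = n ∧
    ∀ u ∈ T, ∀ v ∈ T, u ≠ v → ((2 * a : ℕ) : ℕ∞) < G.edist u v}

/-- `D_S`: the diameter of the induced subgraph `G[S]`. -/
noncomputable def setDiam {V : Type*} (G : SimpleGraph V) (S : Set V) : ℕ∞ :=
  ⨆ u ∈ S, ⨆ v ∈ S, (G.restrictS S).edist u v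

namespace SimpleGraph

variable {V : Type*} {G : SimpleGraph V} {u v x : V}

lemma exists_edist_le_edist_le_of_edist_le_add {m n : ℕ} (h : G.edist u v ≤ m + n) :
    ∃ w, G.edist u w ≤ m ∧ G.edist w v ≤ n := by
  obtain ⟨p, hp⟩ := exists_walk_of_edist_ne_top (ne_top_of_le_ne_top (by simp) h)
  have hlen : p.length ≤ m + n := by exact_mod_cast hp ▸ h
  refine ⟨p.getVert m, (p.take m).edist_le.trans ?_, (p.drop m).edist_le.trans ?_⟩
  · simp
  · simp only [Walk.drop_length, Nat.cast_le]
    omega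

lemma lt_edist_of_disjoint {a : ℕ}
    (h : Disjoint {x | G.edist u x ≤ a} {x | G.edist v x ≤ a}) :
    ((2 * a : ℕ) : ℕ∞) < G.edist u v := by
  by_contra! huv
  obtain ⟨m, hum, hmv⟩ := exists_edist_le_edist_le_of_edist_le_add (m := a) (n := a)
    (by simpa [two_mul] using huv)
  exact Set.disjoint_left.mp h hum (by rwa [edist_comm] at hmv)

lemma Walk.sub_le_edist_getVert (p : G.Walk u v) (hp : (p.length : ℕ∞) = G.edist u v)
    {m M : ℕ} (hM : M ≤ p.length) :
    ((M - m : ℕ) : ℕ∞) ≤ G.edist (p.getVert m) (p.getVert M) := by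
  have htri : (p.length : ℕ∞) ≤
      m + G.edist (p.getVert m) (p.getVert M) + ((p.length - M : ℕ) : ℕ∞) := by
    calc (p.length : ℕ∞) = G.edist u v := hp
      _ ≤ G.edist u (p.getVert m) + G.edist (p.getVert m) (p.getVert M) +
          G.edist (p.getVert M) v := by
        rw [add_assoc]
        exact G.edist_triangle.trans (by gcongr; exact G.edist_triangle)
      _ ≤ _ := by
        gcongr
        · exact (p.take m).edist_le.trans (by simp)
        · exact (p.drop M).edist_le.trans (by simp)
  generalize G.edist (p.getVert m) (p.getVert M) = X at htri ⊢
  induction X using ENat.recTopCoe with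
  | top => simp
  | coe X =>
    norm_cast at htri ⊢
    omega

lemma Walk.card_le_of_edist_getVert_le (p : G.Walk u v) (hp : (p.length : ℕ∞) = G.edist u v)
    {A : Finset ℕ} (hA : ∀ t ∈ A, t ≤ p.length) {c : ℕ∞}
    (hc : ∀ s ∈ A, ∀ t ∈ A, G.edist (p.getVert s) (p.getVert t) ≤ c) :
    (#A : ℕ∞) ≤ c + 1 := by
  rcases A.eq_empty_or_nonempty with rfl | hne
  · simp
  have hmin := A.min'_mem hne
  have hmax := A.max'_mem hne
  have hcard : #A ≤ A.max' hne - A.min' hne + 1 := by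
    refine (card_le_card (s := A) (t := Icc (A.min' hne) (A.max' hne))
      fun t ht => mem_Icc.mpr ⟨A.min'_le t ht, A.le_max' t ht⟩).trans ?_
    rw [Nat.card_Icc]
    omega
  calc (#A : ℕ∞) ≤ ((A.max' hne - A.min' hne : ℕ) : ℕ∞) + 1 := by exact_mod_cast hcard
    _ ≤ c + 1 := by
      gcongr
      exact (p.sub_le_edist_getVert hp (hA _ hmax)).trans (hc _ hmin _ hmax)

lemma Walk.length_add_one_le_sum {ι : Type*} [Fintype ι] (p : G.Walk u v)
    (hp : (p.length : ℕ∞) = G.edist u v) (B : ι → Set V) (c : ι → ℕ∞)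
    (hcover : ∀ x ∈ p.support, ∃ i, x ∈ B i)
    (hB : ∀ i, ∀ x ∈ B i, ∀ y ∈ B i, G.edist x y ≤ c i) :
    (p.length : ℕ∞) + 1 ≤ ∑ i, (c i + 1) := by
  classical
  let A : ι → Finset ℕ := fun i => (range (p.length + 1)).filter (p.getVert · ∈ B i)
  have hcov : range (p.length + 1) ⊆ univ.biUnion A := fun t ht => by
    obtain ⟨i, hi⟩ := hcover _ (p.getVert_mem_support t)
    exact mem_biUnion.mpr ⟨i, mem_univ i, mem_filter.mpr ⟨ht, hi⟩⟩
  calc (p.length : ℕ∞) + 1 = (#(range (p.length + 1)) : ℕ∞) := by simp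
    _ ≤ ∑ i, (#(A i) : ℕ∞) := by exact_mod_cast (card_le_card hcov).trans card_biUnion_le
    _ ≤ ∑ i, (c i + 1) := by
      refine sum_le_sum fun i _ => p.card_le_of_edist_getVert_le hp ?_ ?_
      · exact fun t ht => Nat.lt_succ_iff.mp (mem_range.mp (mem_filter.mp ht).1)
      · exact fun s hs t ht => hB i _ (mem_filter.mp hs).2 _ (mem_filter.mp ht).2

def cthickening (G : SimpleGraph V) (a : ℕ) (W : Set V) : Set V :=
  {x | ∃ w ∈ W, G.edist x w ≤ a}

lemma subset_cthickening (a : ℕ) (W : Set V) : W ⊆ G.cthickening a W :=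
  fun w hw => ⟨w, hw, by simp⟩

lemma cthickening_mono (a : ℕ) {W W' : Set V} (h : W ⊆ W') :
    G.cthickening a W ⊆ G.cthickening a W' :=
  fun _ ⟨w, hw, hxw⟩ => ⟨w, h hw, hxw⟩

lemma cthickening_iUnion {ι : Type*} (a : ℕ) (W : ι → Set V) :
    G.cthickening a (⋃ i, W i) = ⋃ i, G.cthickening a (W i) := by
  ext x
  simp only [cthickening, Set.mem_iUnion, Set.mem_ofPred_eq]
  grind

lemma restrictS_mono {S T : Set V} (h : S ⊆ T) : G.restrictS S ≤ G.restrictS T :=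
  fun _ _ ⟨hu, hv, huv⟩ => ⟨h hu, h hv, huv⟩

lemma Walk.mem_of_mem_support_restrictS {S : Set V} (p : (G.restrictS S).Walk u v) (hu : u ∈ S)
    (hx : x ∈ p.support) : x ∈ S := by
  induction p with
  | nil =>
    rw [Walk.support_nil, List.mem_singleton] at hx
    rwa [hx]
  | cons h q ih =>
    rcases List.mem_cons.mp (Walk.support_cons h q ▸ hx) with rfl | hx
    · exact hu
    · exact ih h.2.1 hx

lemma edist_restrictS_le_length {S : Set V} (p : G.Walk u v) (hp : ∀ x ∈ p.support, x ∈ S) :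
    (G.restrictS S).edist u v ≤ p.length := by
  induction p with
  | nil => simp
  | @cons u w v h q ih =>
    have hadj : (G.restrictS S).Adj u w := ⟨hp u (by simp), hp w (by simp), h⟩
    calc (G.restrictS S).edist u v ≤ 1 + q.length :=
          (G.restrictS S).edist_triangle.trans
            (add_le_add (edist_eq_one_iff_adj.mpr hadj).le (ih fun x hx => hp x (by simp [hx])))
      _ = (Walk.cons h q).length := by simp [add_comm]

/-- A shortest `G`-walk from `x` to `w ∈ W` of length `≤ a` stays within `a` of `W`,
hence inside `S`. -/
lemma edist_restrictS_le_of_cthickening_subset {S W : Set V} {a : ℕ} {w : V}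
    (hS : G.cthickening a W ⊆ S) (hw : w ∈ W) (h : G.edist x w ≤ a) :
    (G.restrictS S).edist x w ≤ a := by
  classical
  obtain ⟨p, hp⟩ := exists_walk_of_edist_ne_top (ne_top_of_le_ne_top (by simp) h)
  refine (edist_restrictS_le_length p fun y hy => hS ⟨w, hw, ?_⟩).trans (hp ▸ h)
  calc G.edist y w ≤ (p.dropUntil y hy).length := (p.dropUntil y hy).edist_le
    _ ≤ p.length := by exact_mod_cast p.length_dropUntil_le_length hy
    _ ≤ a := hp ▸ h

end SimpleGraph

section Diameter

open SimpleGraph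

variable {V : Type*} {G : SimpleGraph V} {S W : Set V} {u v x y : V}

lemma edist_restrictS_le_setDiam (hu : u ∈ S) (hv : v ∈ S) :
    (G.restrictS S).edist u v ≤ setDiam G S :=
  le_iSup₂_of_le u hu (le_iSup₂_of_le v hv le_rfl)

lemma setDiam_add_one_le (hS : S.Nonempty) {C : ℕ∞}
    (h : ∀ u ∈ S, ∀ v ∈ S, (G.restrictS S).edist u v + 1 ≤ C) : setDiam G S + 1 ≤ C := by
  obtain ⟨u, hu⟩ := hS
  have hC : 1 ≤ C := le_add_self.trans (h u hu u hu)
  have hdiam : setDiam G S ≤ C - 1 := iSup₂_le fun u hu => iSup₂_le fun v hv =>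
    ENat.le_sub_of_add_le_right ENat.one_ne_top (h u hu v hv)
  calc setDiam G S + 1 ≤ C - 1 + 1 := by gcongr
    _ = C := tsub_add_cancel_of_le hC

lemma edist_restrictS_le_of_mem_cthickening {a : ℕ} (hS : G.cthickening a W ⊆ S)
    (hx : x ∈ G.cthickening a W) (hy : y ∈ G.cthickening a W) :
    (G.restrictS S).edist x y ≤ a + setDiam G W + a := by
  obtain ⟨x', hx', hxx'⟩ := hx
  obtain ⟨y', hy', hyy'⟩ := hy
  have hWS : W ⊆ S := (subset_cthickening a W).trans hS
  calc (G.restrictS S).edist x y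
      ≤ (G.restrictS S).edist x x' + (G.restrictS S).edist x' y' +
          (G.restrictS S).edist y' y :=
        SimpleGraph.edist_triangle.trans (by gcongr; exact SimpleGraph.edist_triangle)
    _ ≤ a + setDiam G W + a := by
      gcongr
      · exact edist_restrictS_le_of_cthickening_subset hS hx' hxx'
      · exact (edist_anti (restrictS_mono hWS)).trans (edist_restrictS_le_setDiam hx' hy')
      · rw [SimpleGraph.edist_comm]
        exact edist_restrictS_le_of_cthickening_subset hS hy' hyy'

theorem setDiam_add_one_le_sum {ι : Type*} [Fintype ι] (a : ℕ) (Sf : ι → Set V)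
    (hS : S = G.cthickening a (⋃ i, Sf i)) (hne : S.Nonempty)
    (hconn : ∀ u ∈ S, ∀ v ∈ S, (G.restrictS S).Reachable u v) :
    setDiam G S + 1 ≤ ∑ i, (setDiam G (Sf i) + ((2 * a + 1 : ℕ) : ℕ∞)) := by
  refine setDiam_add_one_le hne fun u hu v hv => ?_
  obtain ⟨p, hp⟩ := (hconn u hu v hv).exists_walk_length_eq_edist
  have hcover : ∀ x ∈ p.support, ∃ i, x ∈ G.cthickening a (Sf i) := fun x hx => by
    have hxS := p.mem_of_mem_support_restrictS hu hx
    rwa [hS, cthickening_iUnion, Set.mem_iUnion] at hxS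
  have hdiam : ∀ i, ∀ x ∈ G.cthickening a (Sf i), ∀ y ∈ G.cthickening a (Sf i),
      (G.restrictS S).edist x y ≤ a + setDiam G (Sf i) + a := fun i x hx y hy =>
    edist_restrictS_le_of_mem_cthickening (hS ▸ cthickening_mono a (Set.subset_iUnion Sf i)) hx hy
  rw [← hp]
  calc (p.length : ℕ∞) + 1 ≤ ∑ i, (a + setDiam G (Sf i) + a + 1) :=
        p.length_add_one_le_sum hp _ _ hcover hdiam
    _ = ∑ i, (setDiam G (Sf i) + ((2 * a + 1 : ℕ) : ℕ∞)) := by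
      refine sum_congr rfl fun i _ => ?_
      push_cast
      ring

end Diameter

section Packing

open SimpleGraph Function

variable {V : Type*} {G : SimpleGraph V} {VD : Set V} {a : ℕ} {S : Set V} {T : Finset V}

def IsPacking (G : SimpleGraph V) (VD : Set V) (a : ℕ) (S : Set V) (T : Finset V) : Prop :=
  ↑T ⊆ S ∩ VD ∧ ∀ u ∈ T, ∀ v ∈ T, u ≠ v → ((2 * a : ℕ) : ℕ∞) < G.edist u v

lemma IsPacking.filter (hT : IsPacking G VD a S T) (W : Set V) [DecidablePred (· ∈ W)] :
    IsPacking G VD a W (T.filter (· ∈ W)) := by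
  refine ⟨fun u hu => ?_, fun u hu v hv => hT.2 u (mem_filter.mp hu).1 v (mem_filter.mp hv).1⟩
  rw [coe_filter] at hu
  exact ⟨hu.2, (hT.1 hu.1).2⟩

variable [Fintype V]

lemma packing_eq_sSup :
    packing G VD a S = sSup {n | ∃ T, IsPacking G VD a S T ∧ #T = n} := by
  simp only [packing, IsPacking]
  congr 1
  ext n
  exact exists_congr fun T => by tauto

lemma bddAbove_card_isPacking : BddAbove {n | ∃ T, IsPacking G VD a S T ∧ #T = n} :=
  ⟨Fintype.card V, fun _ ⟨T, _, hT⟩ => hT ▸ card_le_univ T⟩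

lemma IsPacking.card_le_packing (hT : IsPacking G VD a S T) : #T ≤ packing G VD a S := by
  rw [packing_eq_sSup]
  exact le_csSup bddAbove_card_isPacking ⟨T, hT, rfl⟩

variable (G VD a S) in
lemma exists_isPacking_card_eq_packing : ∃ T, IsPacking G VD a S T ∧ #T = packing G VD a S := by
  rw [packing_eq_sSup]
  refine Nat.sSup_mem ?_ bddAbove_card_isPacking
  exact ⟨0, ∅, ⟨by simp, by simp⟩, rfl⟩

lemma packing_le_sum_of_subset_iUnion {ι : Type*} [Fintype ι] {Sf : ι → Set V}
    (h : S ∩ VD ⊆ ⋃ i, Sf i) : packing G VD a S ≤ ∑ i, packing G VD a (Sf i) := by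
  classical
  obtain ⟨T, hT, hcard⟩ := exists_isPacking_card_eq_packing G VD a S
  have hcover : T ⊆ univ.biUnion fun i => T.filter (· ∈ Sf i) := fun u hu => by
    obtain ⟨i, hi⟩ := Set.mem_iUnion.mp (h (hT.1 hu))
    exact mem_biUnion.mpr ⟨i, mem_univ i, mem_filter.mpr ⟨hu, hi⟩⟩
  calc packing G VD a S = #T := hcard.symm
    _ ≤ ∑ i, #(T.filter (· ∈ Sf i)) := (card_le_card hcover).trans card_biUnion_le
    _ ≤ ∑ i, packing G VD a (Sf i) := sum_le_sum fun i _ => (hT.filter (Sf i)).card_le_packing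

lemma sum_packing_le {ι : Type*} [Fintype ι] {Sf : ι → Set V}
    (hdisj : Pairwise (Disjoint on Sf)) (hSf : ∀ i, Sf i ⊆ S)
    (hball : ∀ i, ∀ u ∈ Sf i ∩ VD, {x | G.edist u x ≤ a} ⊆ Sf i) :
    ∑ i, packing G VD a (Sf i) ≤ packing G VD a S := by
  classical
  choose T hT hcard using fun i => exists_isPacking_card_eq_packing G VD a (Sf i)
  have hTdisj : Pairwise (Disjoint on T) := fun i j hij => Finset.disjoint_left.mpr
    fun u hi hj => Set.disjoint_left.mp (hdisj hij) ((hT i).1 hi).1 ((hT j).1 hj).1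
  have hU : IsPacking G VD a S (univ.biUnion T) := by
    refine ⟨fun u hu => ?_, fun u hu v hv huv => ?_⟩
    · obtain ⟨i, -, hi⟩ := mem_biUnion.mp hu
      exact ⟨hSf i ((hT i).1 hi).1, ((hT i).1 hi).2⟩
    · obtain ⟨i, -, hui⟩ := mem_biUnion.mp hu
      obtain ⟨j, -, hvj⟩ := mem_biUnion.mp hv
      obtain rfl | hij := eq_or_ne i j
      · exact (hT i).2 u hui v hvj huv
      · exact lt_edist_of_disjoint
          ((hdisj hij).mono (hball i u ((hT i).1 hui)) (hball j v ((hT j).1 hvj)))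
  calc ∑ i, packing G VD a (Sf i) = #(univ.biUnion T) := by
        rw [card_biUnion fun i _ j _ hij => hTdisj hij]
        exact sum_congr rfl fun i _ => (hcard i).symm
    _ ≤ packing G VD a S := hU.card_le_packing

end Packing

section Merging

open SimpleGraph Function

variable {V : Type*} {G : SimpleGraph V} {VD : Set V} {a : ℕ} {ι : Type*} {Sf : ι → Set V}

lemma cthickening_iUnion_inter_subset
    (hVD : ∀ u ∈ VD, (∃ i, {x | G.edist u x ≤ (a : ℕ∞)} ⊆ Sf i) ∨
      ({x | G.edist u x ≤ (a : ℕ∞)} ∩ ⋃ i, Sf i) = ∅) :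
    G.cthickening a (⋃ i, Sf i) ∩ VD ⊆ ⋃ i, Sf i := by
  rintro u ⟨⟨w, hw, huw⟩, hu⟩
  rcases hVD u hu with ⟨i, hi⟩ | hempty
  · exact Set.mem_iUnion.mpr ⟨i, hi (by simp)⟩
  · exact (Set.eq_empty_iff_forall_notMem.mp hempty w ⟨huw, hw⟩).elim

lemma ball_subset_of_mem_inter (hdisj : Pairwise (Disjoint on Sf))
    (hVD : ∀ u ∈ VD, (∃ i, {x | G.edist u x ≤ (a : ℕ∞)} ⊆ Sf i) ∨
      ({x | G.edist u x ≤ (a : ℕ∞)} ∩ ⋃ i, Sf i) = ∅)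
    {i : ι} {u : V} (hu : u ∈ Sf i ∩ VD) : {x | G.edist u x ≤ (a : ℕ∞)} ⊆ Sf i := by
  have hself : u ∈ {x | G.edist u x ≤ (a : ℕ∞)} := by simp
  rcases hVD u hu.2 with ⟨j, hj⟩ | hempty
  · obtain rfl : i = j := by_contra fun hij => Set.disjoint_left.mp (hdisj hij) hu.1 (hj hself)
    exact hj
  · exact (Set.eq_empty_iff_forall_notMem.mp hempty u ⟨hself, Set.mem_iUnion.mpr ⟨i, hu.1⟩⟩).elim

end Merging

theorem merged_component_packing_and_diam_general
    {V : Type*} [Fintype V] (G : SimpleGraph V)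
    (a : ℕ) (VD : Set V)
    (k : ℕ) (Sf : Fin k → Set V)
    (hdisj : ∀ i j, i ≠ j → Disjoint (Sf i) (Sf j))
    (hVD : ∀ u ∈ VD,
      (∃ i, {x | G.edist u x ≤ (a : ℕ∞)} ⊆ Sf i) ∨
      ({x | G.edist u x ≤ (a : ℕ∞)} ∩ ⋃ i, Sf i) = ∅)
    (S : Set V) (hS : S = {v | ∃ w ∈ ⋃ i, Sf i, G.edist v w ≤ (a : ℕ∞)})
    (hSne : S.Nonempty)
    (hSconn : ∀ u ∈ S, ∀ v ∈ S, (G.restrictS S).Reachable u v) :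
    packing G VD a S = ∑ i, packing G VD a (Sf i) ∧
    setDiam G S + 1 ≤ ∑ i, (setDiam G (Sf i) + ((2 * a + 1 : ℕ) : ℕ∞)) := by
  change S = G.cthickening a (⋃ i, Sf i) at hS
  refine ⟨le_antisymm ?_ ?_, setDiam_add_one_le_sum a Sf hS hSne hSconn⟩
  · exact packing_le_sum_of_subset_iUnion (hS ▸ cthickening_iUnion_inter_subset hVD)
  · refine sum_packing_le hdisj (fun i => ?_) fun i u hu => ball_subset_of_mem_inter hdisj hVD hu
    exact hS ▸ (Set.subset_iUnion Sf i).trans (SimpleGraph.subset_cthickening a _)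

/-- Lemma B.6. Let `a ≥ 1`, `V_D' ⊆ V`, and `S₁, …, S_k` pairwise disjoint
vertex sets, each inducing a connected subgraph, such that for each `u ∈ V_D'`, either
`N^a(u) ⊆ Sᵢ` for some `i`, or `N^a(u) ∩ (S₁ ∪ ⋯ ∪ S_k) = ∅`. Define
`S := {v : dist_G(v, S₁ ∪ ⋯ ∪ S_k) ≤ a}` and suppose `G[S]` is connected. Then
(1) `N_S = ∑ᵢ N_{Sᵢ}` and (2) `D_S ≤ −1 + ∑ᵢ (D_{Sᵢ} + 2a + 1)`, i.e.
`D_S + 1 ≤ ∑ᵢ (D_{Sᵢ} + 2a + 1)`. -/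
theorem merged_component_packing_and_diam
    {V : Type*} [Fintype V] (G : SimpleGraph V)
    (a : ℕ) (ha : 1 ≤ a) (VD : Set V)
    (k : ℕ) (Sf : Fin k → Set V)
    (hdisj : ∀ i j, i ≠ j → Disjoint (Sf i) (Sf j))
    (hne : ∀ i, (Sf i).Nonempty)
    (hconn : ∀ i, ∀ u ∈ Sf i, ∀ v ∈ Sf i, (G.restrictS (Sf i)).Reachable u v)
    (hVD : ∀ u ∈ VD,
      (∃ i, {x | G.edist u x ≤ (a : ℕ∞)} ⊆ Sf i) ∨
      ({x | G.edist u x ≤ (a : ℕ∞)} ∩ ⋃ i, Sf i) = ∅)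
    (S : Set V) (hS : S = {v | ∃ w ∈ ⋃ i, Sf i, G.edist v w ≤ (a : ℕ∞)})
    (hSne : S.Nonempty)
    (hSconn : ∀ u ∈ S, ∀ v ∈ S, (G.restrictS S).Reachable u v) :
    packing G VD a S = ∑ i, packing G VD a (Sf i) ∧
    setDiam G S + 1 ≤ ∑ i, (setDiam G (Sf i) + ((2 * a + 1 : ℕ) : ℕ∞)) :=
  merged_component_packing_and_diam_general G a VD k Sf hdisj hVD S hS hSne hSconn
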